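/- If X and Y are metric spaces that are γ_k-sets, then X × Y is a γ_k-set. -/

import Mathlib

/-- A `k`-cover: a family of open sets such that every compact set is contained in a member. -/
def IsKCover {Z : Type*} [TopologicalSpace Z] (𝒰 : Set (Set Z)) : Prop :=
  (∀ U ∈ 𝒰, IsOpen U) ∧ ∀ C : Set Z, IsCompact C → ∃ U ∈ 𝒰, C ⊆ U

/-- `Z` is a `γ_k`-set: every `k`-cover admits a sequence `(U_n)` such that every
compact set is contained in all but finitely many `U_n`. -/
def IsGammaKSet (Z : Type*) [TopologicalSpace Z] : Prop :=
  ∀ 𝒰 : Set (Set Z), IsKCover 𝒰 →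
    ∃ U : ℕ → Set Z, (∀ n, U n ∈ 𝒰) ∧
      ∀ C : Set Z, IsCompact C → ∀ᶠ n in Filter.atTop, C ⊆ U n

/-!
A metric `γ_k`-set is locally compact. Otherwise some point `x` has, in every ball
`closedBall x (1 / (k + 1))`, a sequence `u k` without cluster points. The open sets `U` such
that `u 0 k ∈ U` forces `U` to miss a tail of `u k` form a `k`-cover, and a `γ_k`-sequence
`(V j)` taken from it must, for each `k`, eventually miss some term `u k (n k)`. Choosing
`j = J k ≥ k` accordingly, the points `u k (n k)` converge to `x`, and the compact set they
form together with `x` lies in no `V (J k)` for large `k`.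

A locally compact `γ_k`-set is σ-compact (use the `k`-cover by interiors of compact sets), and
in a locally compact σ-compact space a compact exhaustion `K n` yields `γ_k`-sequences by
choosing members of the cover containing `K n`. Both properties pass to finite products.
-/

open Filter Metric Set Topology

section TopologicalSpace

variable {X : Type*} [TopologicalSpace X]

lemma IsClosed.exists_seq_forall_not_mapClusterPt [FirstCountableTopology X] {s : Set X}
    (hs : IsClosed s) (hns : ¬IsSeqCompact s) :
    ∃ u : ℕ → X, (∀ n, u n ∈ s) ∧ ∀ a, ¬MapClusterPt a atTop u := by
  simp only [IsSeqCompact, not_forall, not_exists, not_and] at hns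
  obtain ⟨u, hus, hu⟩ := hns
  refine ⟨u, hus, fun a ha => ?_⟩
  obtain ⟨φ, hφ, hlim⟩ := ha.tendsto_subseq
  exact hu a (hs.mem_of_tendsto hlim (Eventually.of_forall fun n => hus _)) φ hφ hlim

lemma IsCompact.exists_isOpen_superset_eventually_notMem {C : Set X} (hC : IsCompact C)
    {u : ℕ → X} (hu : ∀ a, ¬MapClusterPt a atTop u) :
    ∃ U, IsOpen U ∧ C ⊆ U ∧ ∀ᶠ n in atTop, u n ∉ U := by
  have hdisj : Disjoint (𝓝ˢ C) (map u atTop) :=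
    hC.disjoint_nhdsSet_left.2 fun a _ => by
      simpa [MapClusterPt, ClusterPt, ← disjoint_iff] using hu a
  obtain ⟨U, ⟨hUo, hCU⟩, hU⟩ := (hasBasis_nhdsSet C).disjoint_iff_left.1 hdisj
  exact ⟨U, hUo, hCU, hU⟩

lemma isKCover_of_forall_not_mapClusterPt {u : ℕ → ℕ → X}
    (hu : ∀ k a, ¬MapClusterPt a atTop (u k)) :
    IsKCover {U | IsOpen U ∧ ∀ k, u 0 k ∈ U → ∀ᶠ n in atTop, u k n ∉ U} := by
  refine ⟨fun U hU => hU.1, fun C hC => ?_⟩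
  choose U hUo hCU hUu using fun k => hC.exists_isOpen_superset_eventually_notMem (hu k)
  obtain ⟨B, hB⟩ := eventually_atTop.1 (hUu 0)
  refine ⟨U 0 ∩ ⋂ k < B, U k, ⟨?_, fun k hk => ?_⟩, ?_⟩
  · exact (hUo 0).inter ((finite_lt_nat B).isOpen_biInter fun k _ => hUo k)
  · have hkB : k < B := not_le.1 fun h => hB k h hk.1
    exact (hUu k).mono fun n hn hn' => hn (mem_iInter₂.1 hn'.2 k hkB)
  · exact subset_inter (hCU 0) (subset_iInter₂ fun k _ => hCU k)

lemma not_isGammaKSet_of_forall_not_mapClusterPt (x : X) (u : ℕ → ℕ → X)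
    (hux : ∀ s ∈ 𝓝 x, ∀ᶠ k in atTop, ∀ n, u k n ∈ s)
    (hu : ∀ k a, ¬MapClusterPt a atTop (u k)) : ¬IsGammaKSet X := by
  intro hX
  obtain ⟨V, hV𝒰, hV⟩ := hX _ (isKCover_of_forall_not_mapClusterPt hu)
  have hmiss : ∀ k, ∀ᶠ j in atTop, ∃ n, u k n ∉ V j := fun k =>
    (hV {u 0 k} isCompact_singleton).mono fun j hj => ((hV𝒰 j).2 k (hj rfl)).exists
  choose J hJ n hn using fun k => ((eventually_ge_atTop k).and (hmiss k)).exists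
  have hq : Tendsto (fun k => u k (n k)) atTop (𝓝 x) := fun s hs =>
    (hux s hs).mono fun k hk => hk (n k)
  obtain ⟨N, hN⟩ := eventually_atTop.1 (hV _ hq.isCompact_insert_range)
  exact hn N (hN (J N) (hJ N) (mem_insert_of_mem _ (mem_range_self N)))

theorem IsGammaKSet.sigmaCompactSpace [WeaklyLocallyCompactSpace X] (hX : IsGammaKSet X) :
    SigmaCompactSpace X := by
  have h𝒰 : IsKCover (interior '' {K : Set X | IsCompact K}) := by
    refine ⟨?_, fun C hC => ?_⟩
    · rintro _ ⟨K, -, rfl⟩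
      exact isOpen_interior
    · obtain ⟨K, hK, hCK⟩ := exists_compact_superset hC
      exact ⟨_, mem_image_of_mem _ hK, hCK⟩
  obtain ⟨V, hV, hcover⟩ := hX _ h𝒰
  choose K hK hKV using hV
  refine ⟨⟨K, hK, eq_univ_of_forall fun x => mem_iUnion.2 ?_⟩⟩
  obtain ⟨n, hn⟩ := (hcover {x} isCompact_singleton).exists
  exact ⟨n, interior_subset (by simpa [hKV n] using hn)⟩

theorem isGammaKSet_of_sigmaCompactSpace [WeaklyLocallyCompactSpace X] [SigmaCompactSpace X] :
    IsGammaKSet X := by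
  intro 𝒰 h𝒰
  let K := CompactExhaustion.choice X
  choose U hU hKU using fun n => h𝒰.2 (K n) (K.isCompact n)
  refine ⟨U, hU, fun C hC => ?_⟩
  obtain ⟨m, hm⟩ := K.exists_superset_of_isCompact hC
  exact eventually_atTop.2 ⟨m, fun n hn => (hm.trans (K.subset hn)).trans (hKU n)⟩

end TopologicalSpace

theorem IsGammaKSet.weaklyLocallyCompactSpace {X : Type*} [PseudoMetricSpace X]
    (hX : IsGammaKSet X) : WeaklyLocallyCompactSpace X := by
  refine ⟨fun x => ?_⟩
  by_contra! h
  have hseq : ∀ k : ℕ, ∃ u : ℕ → X, (∀ n, u n ∈ closedBall x (1 / (k + 1))) ∧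
      ∀ a, ¬MapClusterPt a atTop u := fun k =>
    isClosed_closedBall.exists_seq_forall_not_mapClusterPt fun hs =>
      h _ hs.isCompact (closedBall_mem_nhds x (by positivity))
  choose u hux hu using hseq
  refine not_isGammaKSet_of_forall_not_mapClusterPt x u (fun s hs => ?_) hu hX
  obtain ⟨ε, hε, hεs⟩ := Metric.mem_nhds_iff.1 hs
  filter_upwards [tendsto_one_div_add_atTop_nhds_zero_nat.eventually (gt_mem_nhds hε)] with k hk n
  exact hεs (closedBall_subset_ball hk (hux k n))

theorem stmt7 {X Y : Type*} [MetricSpace X] [MetricSpace Y]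
    (hX : IsGammaKSet X) (hY : IsGammaKSet Y) :
    IsGammaKSet (X × Y) := by
  have := hX.weaklyLocallyCompactSpace
  have := hY.weaklyLocallyCompactSpace
  have := hX.sigmaCompactSpace
  have := hY.sigmaCompactSpace
  exact isGammaKSet_of_sigmaCompactSpace
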